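/- arXiv:1511.08139 — 2 statements merged into one kernel-verified Lean document; each statement's English description precedes it below -/
import Mathlib

section
/- Let (G,N) be a pair of finite groups which is nilpotent of class at most t, with t ≥ 2 (i.e. [N,_tG] = 1). Then exp(M^{(c)}(G,N)) divides exp(M^{(c)}(G/[N,G], N/[N,G])) · ∏_{i=1}^{t−1} exp(⊗^{c+1}([N,_iG], G/[N,_iG])), where exp(X) denotes the exponent of the group X. -/
/-!
Write `T i = π⁻¹([N,_i G])`, so that `T 1 = π⁻¹([N,G])` and `T t = R`. The exponent of
`M^{(c)}(G/[N,G], N/[N,G])` sends `R ∩ [S,_c F]` into `[T 1,_c F]`. For `i ≥ 1`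
put `K = [N,_i G] ≤ G'`. Modulo `[T (i+1),_c F]` the subgroup `[T i,_c F]` is central, and
`k ⊗ g₁ ⊗ ⋯ ⊗ g_c ↦ [k̃, g̃₁, …, g̃_c]` is a well-defined surjection from `⊗^{c+1}(K, G/K)`
onto `[T i,_c F] / [T (i+1),_c F]`. It is additive in each `g_j` because commutators of the
next layer are central, and it kills `K` in the `G/K` slots because `K ≤ G'`, by the three
subgroups lemma. Hence the exponent of that tensor product pushes `[T i,_c F]` into
`[T (i+1),_c F]`. Chaining these steps for `i = 1, …, t - 1` lands in `[R,_c F]`.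
-/

open Subgroup

/-- `itComm X Y c` is the `c`-fold iterated commutator subgroup
`[X,_c Y] = ⁅…⁅⁅X,Y⁆,Y⁆,…,Y⁆` (with `c` copies of `Y`); `itComm X Y 0 = X`. -/
def itComm {P : Type*} [Group P] (X Y : Subgroup P) : ℕ → Subgroup P
  | 0 => X
  | c + 1 => ⁅itComm X Y c, Y⁆

instance itComm_normal {P : Type*} [Group P] (X Y : Subgroup P) [hX : X.Normal] [hY : Y.Normal]
    (c : ℕ) : (itComm X Y c).Normal := by
  induction c with
  | zero => exact hX
  | succ c ih => exact Subgroup.commutator_normal _ _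

/-- The abelianization of a group, written additively. -/
abbrev AbOf (A : Type) [Group A] : Type := Additive (Abelianization A)

/-- Iterated tensor product `M ⊗ B ⊗ ⋯ ⊗ B` (with `c` factors `B`) of `ℤ`-modules. -/
noncomputable def iterTensor (M B : ModuleCat ℤ) : ℕ → ModuleCat ℤ
  | 0 => M
  | c + 1 => ModuleCat.of ℤ (TensorProduct ℤ (iterTensor M B c) B)

/-- `⊗^{c+1}(A, B) = A^{ab} ⊗_ℤ B^{ab} ⊗_ℤ ⋯ ⊗_ℤ B^{ab}` with `c` factors `B^{ab}`. -/
noncomputable def tensorPair (A B : Type) [Group A] [Group B] (c : ℕ) : ModuleCat ℤ :=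
  iterTensor (ModuleCat.of ℤ (AbOf A)) (ModuleCat.of ℤ (AbOf B)) c

/-- `M^{(c)}(G,N) = (R ∩ [S,_c F]) / [R,_c F]`, where `R = ker π` and `S = π⁻¹(N)`,
relative to the free presentation `π : F ↠ G`. -/
def McPair {F G : Type} [Group F] [Group G] (π : F →* G) (N : Subgroup G) (c : ℕ) : Type :=
  (π.ker ⊓ itComm (N.comap π) ⊤ c : Subgroup F) ⧸
    (itComm π.ker ⊤ c).subgroupOf (π.ker ⊓ itComm (N.comap π) ⊤ c)

noncomputable instance {F G : Type} [Group F] [Group G] (π : F →* G) (N : Subgroup G) (c : ℕ) :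
    Group (McPair π N c) :=
  inferInstanceAs (Group ((π.ker ⊓ itComm (N.comap π) ⊤ c : Subgroup F) ⧸
    (itComm π.ker ⊤ c).subgroupOf (π.ker ⊓ itComm (N.comap π) ⊤ c)))

/-- `M^{(c)}(G/K, N/K) = (T ∩ [S,_c F]) / [T,_c F]`, where `T = π⁻¹(K)` and `S = π⁻¹(N)`,
relative to the free presentation `π : F ↠ G`. -/
def McPairQuot {F G : Type} [Group F] [Group G] (π : F →* G) (N K : Subgroup G) (c : ℕ) :
    Type :=
  (K.comap π ⊓ itComm (N.comap π) ⊤ c : Subgroup F) ⧸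
    (itComm (K.comap π) ⊤ c).subgroupOf (K.comap π ⊓ itComm (N.comap π) ⊤ c)

noncomputable instance {F G : Type} [Group F] [Group G] (π : F →* G) (N K : Subgroup G)
    [K.Normal] (c : ℕ) : Group (McPairQuot π N K c) :=
  inferInstanceAs (Group ((K.comap π ⊓ itComm (N.comap π) ⊤ c : Subgroup F) ⧸
    (itComm (K.comap π) ⊤ c).subgroupOf (K.comap π ⊓ itComm (N.comap π) ⊤ c)))

open scoped commutatorElement

section IteratedCommutator

variable {P : Type*} [Group P]

theorem Subgroup.commutator_commutator_le_sup (H K L : Subgroup P) [H.Normal] [K.Normal]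
    [L.Normal] : ⁅⁅H, K⁆, L⁆ ≤ ⁅⁅K, L⁆, H⁆ ⊔ ⁅⁅L, H⁆, K⁆ := by
  -- the three subgroups lemma, applied in the quotient by the right-hand side
  let f := QuotientGroup.mk' (⁅⁅K, L⁆, H⁆ ⊔ ⁅⁅L, H⁆, K⁆)
  have hbot {X Y Z : Subgroup P} : ⁅⁅X.map f, Y.map f⁆, Z.map f⁆ = ⊥ ↔ ⁅⁅X, Y⁆, Z⁆ ≤ f.ker := by
    rw [← map_commutator, ← map_commutator, map_eq_bot_iff]
  have hker : f.ker = ⁅⁅K, L⁆, H⁆ ⊔ ⁅⁅L, H⁆, K⁆ := QuotientGroup.ker_mk' _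
  rw [← hker, ← hbot]
  exact commutator_commutator_eq_bot_of_rotate (hbot.2 (hker.symm ▸ le_sup_left))
    (hbot.2 (hker.symm ▸ le_sup_right))

theorem itComm_mono_left {X Y : Subgroup P} (h : X ≤ Y) (Z : Subgroup P) :
    ∀ c, itComm X Z c ≤ itComm Y Z c
  | 0 => h
  | c + 1 => commutator_mono (itComm_mono_left h Z c) le_rfl

theorem itComm_succ' (X Z : Subgroup P) : ∀ c, itComm X Z (c + 1) = itComm ⁅X, Z⁆ Z c
  | 0 => rfl
  | c + 1 => congrArg (⁅·, Z⁆) (itComm_succ' X Z c)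

theorem itComm_succ_le_of_commutator_le {A B : Subgroup P} (h : ⁅A, ⊤⁆ ≤ B) (c : ℕ) :
    itComm A ⊤ (c + 1) ≤ itComm B ⊤ c :=
  (itComm_succ' A ⊤ c).trans_le (itComm_mono_left h ⊤ c)

theorem commutator_itComm_le (X Y : Subgroup P) [X.Normal] [Y.Normal] :
    ∀ c k, ⁅itComm X ⊤ c, itComm Y ⊤ k⁆ ≤ itComm Y ⊤ (k + c + 1)
  | 0, k => (commutator_comm _ _).trans_le (commutator_mono le_rfl le_top)
  | c + 1, k => by
    refine (commutator_commutator_le_sup _ _ _).trans (sup_le ?_ ?_)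
    · rw [commutator_comm ⊤, commutator_comm, show k + (c + 1) + 1 = k + 1 + c + 1 by omega]
      exact commutator_itComm_le X Y c (k + 1)
    · rw [commutator_comm (itComm Y ⊤ k)]
      exact commutator_mono (commutator_itComm_le X Y c k) le_rfl

end IteratedCommutator

section QuotientSubgroupOf

variable {F : Type*} [Group F] {P Z : Subgroup F} [(Z.subgroupOf P).Normal]

theorem exponent_quotient_subgroupOf_dvd_iff {n : ℕ} :
    Monoid.exponent (P ⧸ Z.subgroupOf P) ∣ n ↔ ∀ x ∈ P, x ^ n ∈ Z := by
  have hmk (x : P) : (x : P ⧸ Z.subgroupOf P) ^ n = 1 ↔ (x : F) ^ n ∈ Z := by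
    rw [← QuotientGroup.mk_pow, QuotientGroup.eq_one_iff, mem_subgroupOf, coe_pow]
  rw [Monoid.exponent_dvd_iff_forall_pow_eq_one, QuotientGroup.mk_surjective.forall]
  exact ⟨fun h x hx => (hmk ⟨x, hx⟩).1 (h _), fun h x => (hmk x).2 (h x x.2)⟩

variable (P Z) in
abbrev quotientSubgroupOfCommGroup (h : ⁅P, P⁆ ≤ Z) : CommGroup (P ⧸ Z.subgroupOf P) where
  __ := (inferInstance : Group (P ⧸ Z.subgroupOf P))
  mul_comm q r := by
    induction q using QuotientGroup.induction_on with | H x => ?_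
    induction r using QuotientGroup.induction_on with | H y => ?_
    rw [← QuotientGroup.mk_mul, ← QuotientGroup.mk_mul, QuotientGroup.eq, mem_subgroupOf]
    convert h (commutator_mem_commutator (inv_mem y.2) (inv_mem x.2)) using 1
    simp only [coe_mul, coe_inv, commutatorElement_def]
    group

end QuotientSubgroupOf

theorem exists_abelianization_lift_of_surjective {F H C : Type*} [Group F] [Group H]
    [CommGroup C] (p : F →* H) (hp : Function.Surjective p) (g : F →* C) (h : p.ker ≤ g.ker) :
    ∃ ψ : Abelianization H →* C, ∀ x, ψ (Abelianization.of (p x)) = g x :=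
  ⟨Abelianization.lift (p.liftOfSurjective hp ⟨g, h⟩), fun x => by simp⟩

theorem exists_surjective_iterTensor {M B : ModuleCat ℤ} {Q : ℕ → Type*}
    [∀ c, AddCommGroup (Q c)] (φ : M →+ Q 0) (hφ : Function.Surjective φ)
    (β : ∀ c, Q c →+ B →+ Q (c + 1))
    (hβ : ∀ c, AddSubgroup.closure (Set.range fun qb : Q c × B => β c qb.1 qb.2) = ⊤) :
    ∀ c, ∃ Φ : iterTensor M B c →+ Q c, Function.Surjective Φ
  | 0 => ⟨φ, hφ⟩
  | c + 1 => by
    obtain ⟨Φ, hΦ⟩ := exists_surjective_iterTensor φ hφ β hβ c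
    let Ψ : iterTensor M B (c + 1) →+ Q (c + 1) :=
      TensorProduct.liftAddHom ((β c).comp Φ) fun n t b => by
        rw [← Int.cast_id (n := n), Int.cast_smul_eq_zsmul, Int.cast_smul_eq_zsmul]
        simp only [AddMonoidHom.comp_apply, map_zsmul, AddMonoidHom.zsmul_apply]
    refine ⟨Ψ, ?_⟩
    rw [← AddMonoidHom.range_eq_top, eq_top_iff, ← hβ c, AddSubgroup.closure_le]
    rintro _ ⟨⟨q, b⟩, rfl⟩
    obtain ⟨t, rfl⟩ := hΦ q
    exact ⟨t ⊗ₜ b, rfl⟩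

section CommutatorQuotient

variable {F : Type*} [Group F] (A B : Subgroup F)

abbrev itCommQuot (c : ℕ) : Type _ :=
  itComm A ⊤ c ⧸ (itComm B ⊤ c).subgroupOf (itComm A ⊤ c)

def commClass (c : ℕ) (a : itComm A ⊤ c) (f : F) : itCommQuot A B (c + 1) :=
  ((⟨⁅(a : F), f⁆, commutator_mem_commutator a.2 (mem_top f)⟩ : itComm A ⊤ (c + 1)) :
    itCommQuot A B (c + 1))

variable {A B}

theorem commutator_itComm_self_le (hAB : ⁅A, ⊤⁆ ≤ B) (c : ℕ) :
    ⁅itComm A ⊤ c, itComm A ⊤ c⁆ ≤ itComm B ⊤ c :=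
  (commutator_mono le_rfl le_top).trans (itComm_succ_le_of_commutator_le hAB c)

instance [B.Normal] [Fact (⁅A, ⊤⁆ ≤ B)] (c : ℕ) : CommGroup (itCommQuot A B c) :=
  quotientSubgroupOfCommGroup _ _ (commutator_itComm_self_le Fact.out c)

theorem commutatorElement_mem_itComm (hAB : ⁅A, ⊤⁆ ≤ B) {c : ℕ} {w : F}
    (hw : w ∈ itComm A ⊤ (c + 1)) (g : F) : ⁅w, g⁆ ∈ itComm B ⊤ (c + 1) :=
  itComm_succ_le_of_commutator_le hAB (c + 1) (commutator_mem_commutator hw (mem_top g))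

theorem commClass_eq_one_iff [B.Normal] {c : ℕ} (a : itComm A ⊤ c) (f : F) :
    commClass A B c a f = 1 ↔ ⁅(a : F), f⁆ ∈ itComm B ⊤ (c + 1) :=
  (QuotientGroup.eq_one_iff _).trans mem_subgroupOf

theorem commClass_mul_left [B.Normal] (hAB : ⁅A, ⊤⁆ ≤ B) {c : ℕ} (a a' : itComm A ⊤ c) (f : F) :
    commClass A B c (a * a') f = commClass A B c a f * commClass A B c a' f := by
  have hu := commutator_mem_commutator a.2 (mem_top f)
  have hv := commutator_mem_commutator a'.2 (mem_top f)
  refine QuotientGroup.eq.2 (mem_subgroupOf.2 ?_)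
  convert mul_mem ((itComm_normal B ⊤ (c + 1)).conj_mem _
    (inv_mem (commutatorElement_mem_itComm hAB (inv_mem hv) a)) ⁅(a : F), f⁆⁻¹)
    (commutatorElement_mem_itComm hAB (inv_mem hu) ⁅(a' : F), f⁆⁻¹) using 1
  simp only [coe_mul, coe_inv, commutatorElement_def]
  group

theorem commClass_mul_right [B.Normal] (hAB : ⁅A, ⊤⁆ ≤ B) {c : ℕ} (a : itComm A ⊤ c) (f g : F) :
    commClass A B c a (f * g) = commClass A B c a f * commClass A B c a g := by
  have hv := commutator_mem_commutator a.2 (mem_top g)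
  refine QuotientGroup.eq.2 (mem_subgroupOf.2 ?_)
  convert inv_mem (commutatorElement_mem_itComm hAB (inv_mem hv) f) using 1
  simp only [coe_mul, coe_inv, commutatorElement_def]
  group

theorem commClass_eq_one_of_mem_left [B.Normal] {c : ℕ} (a : itComm A ⊤ c)
    (ha : (a : F) ∈ itComm B ⊤ c) (f : F) : commClass A B c a f = 1 :=
  (commClass_eq_one_iff a f).2 (commutator_mem_commutator ha (mem_top f))

theorem commClass_eq_one_of_mem_right [A.Normal] [B.Normal] (hAB : ⁅A, ⊤⁆ ≤ B)
    (hA : A ≤ commutator F ⊔ B) {c : ℕ} (a : itComm A ⊤ c) {f : F} (hf : f ∈ A) :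
    commClass A B c a f = 1 := by
  obtain ⟨u, hu, b, hb, rfl⟩ := mem_sup_of_normal_right.1 (hA hf)
  rw [commClass_mul_right hAB, (commClass_eq_one_iff a u).2, (commClass_eq_one_iff a b).2,
    one_mul]
  · simpa using commutator_itComm_le A B c 0 (commutator_mem_commutator a.2 hb)
  · -- read `commutator F` as `itComm ⊤ ⊤ 1`
    rw [commutator_def] at hu
    refine itComm_succ_le_of_commutator_le hAB (c + 1) (commutator_itComm_le ⊤ A 1 c ?_)
    rw [commutator_comm]
    exact commutator_mem_commutator a.2 hu

theorem closure_range_commClass [B.Normal] (c : ℕ) :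
    Subgroup.closure (Set.range fun af : itComm A ⊤ c × F => commClass A B c af.1 af.2) =
      ⊤ := by
  refine eq_top_iff.2 fun q _ => ?_
  obtain ⟨⟨w, hw⟩, rfl⟩ := QuotientGroup.mk_surjective q
  refine closure_induction (p := fun w hw => ((⟨w, hw⟩ : itComm A ⊤ (c + 1)) :
    itCommQuot A B (c + 1)) ∈ Subgroup.closure _) ?_ (one_mem _) (fun _ _ _ _ => mul_mem)
    (fun _ _ => inv_mem) hw
  rintro _ ⟨a, ha, f, -, rfl⟩
  exact subset_closure ⟨(⟨a, ha⟩, f), rfl⟩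

theorem exists_commClass_pairing [A.Normal] [B.Normal] [Fact (⁅A, ⊤⁆ ≤ B)]
    (hA : A ≤ commutator F ⊔ B) {H : Type*} [Group H] (p : F →* H) (hp : Function.Surjective p)
    (hpA : p.ker ≤ A) (c : ℕ) :
    ∃ Λ : Abelianization H →* (itCommQuot A B c →* itCommQuot A B (c + 1)),
      ∀ (a : itComm A ⊤ c) (f : F), Λ (Abelianization.of (p f)) a = commClass A B c a f := by
  have hAB : ⁅A, ⊤⁆ ≤ B := Fact.out
  let pairWith (f : F) : itCommQuot A B c →* itCommQuot A B (c + 1) :=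
    QuotientGroup.lift _ (MonoidHom.mk' (commClass A B c · f) fun a a' =>
      commClass_mul_left hAB a a' f) fun a ha => commClass_eq_one_of_mem_left a ha f
  let ν : F →* (itCommQuot A B c →* itCommQuot A B (c + 1)) :=
    MonoidHom.mk' pairWith fun f g => by
      ext a
      exact commClass_mul_right hAB a f g
  obtain ⟨Λ, hΛ⟩ := exists_abelianization_lift_of_surjective p hp ν fun f hf => by
    ext a
    exact commClass_eq_one_of_mem_right hAB hA a (hpA hf)
  exact ⟨Λ, fun a f => by rw [hΛ]; rfl⟩

theorem exists_additive_pairing_closure_eq_top [A.Normal] [B.Normal] [Fact (⁅A, ⊤⁆ ≤ B)]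
    (hA : A ≤ commutator F ⊔ B) {H : Type*} [Group H] (p : F →* H) (hp : Function.Surjective p)
    (hpA : p.ker ≤ A) (c : ℕ) :
    ∃ β : Additive (itCommQuot A B c) →+ Additive (Abelianization H) →+
        Additive (itCommQuot A B (c + 1)),
      AddSubgroup.closure (Set.range fun qb : Additive (itCommQuot A B c) ×
        Additive (Abelianization H) => β qb.1 qb.2) = ⊤ := by
  obtain ⟨Λ, hΛ⟩ := exists_commClass_pairing hA p hp hpA c
  let β : Additive (itCommQuot A B c) →+ Additive (Abelianization H) →+
      Additive (itCommQuot A B (c + 1)) :=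
    AddMonoidHom.mk' (fun q => (Λ.flip q.toMul).toAdditive) fun q q' => by ext; simp
  have hclosure := congrArg Subgroup.toAddSubgroup (closure_range_commClass (A := A) (B := B) c)
  rw [Subgroup.toAddSubgroup_closure, map_top] at hclosure
  refine ⟨β, eq_top_iff.2 (hclosure.symm.le.trans (AddSubgroup.closure_mono ?_))⟩
  rintro y ⟨⟨a, f⟩, hy⟩
  exact ⟨(Additive.ofMul a, Additive.ofMul (Abelianization.of (p f))), by simp [β, hΛ, hy]⟩

end CommutatorQuotient

section Presentation

variable {F G : Type*} [Group F] [Group G] {π : F →* G}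

theorem exists_surjective_abelianization_itCommQuot_zero (hπ : Function.Surjective π)
    (K : Subgroup G) {B : Subgroup F} [B.Normal] [Fact (⁅K.comap π, ⊤⁆ ≤ B)] (hB : π.ker ≤ B) :
    ∃ ψ : Abelianization K →* itCommQuot (K.comap π) B 0, Function.Surjective ψ := by
  let p : K.comap π →* K := (π.comp (K.comap π).subtype).codRestrict K fun a => a.2
  have hp : Function.Surjective p := fun k => by
    obtain ⟨f, hf⟩ := hπ k
    exact ⟨⟨f, show π f ∈ K from hf ▸ k.2⟩, Subtype.ext hf⟩
  obtain ⟨ψ, hψ⟩ := exists_abelianization_lift_of_surjective p hp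
    (QuotientGroup.mk' _ : _ →* itCommQuot (K.comap π) B 0) fun a ha =>
      (QuotientGroup.eq_one_iff _).2 (mem_subgroupOf.2 (hB (congrArg Subtype.val ha)))
  refine ⟨ψ, fun q => ?_⟩
  obtain ⟨a, rfl⟩ := QuotientGroup.mk_surjective q
  exact ⟨_, hψ a⟩

theorem comap_le_commutator_sup (hπ : Function.Surjective π) {K : Subgroup G}
    (hK : K ≤ commutator G) (B : Subgroup F) (hB : π.ker ≤ B) :
    K.comap π ≤ commutator F ⊔ B := by
  intro a ha
  have : π a ∈ (commutator F).map π := by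
    rw [map_commutator_eq, MonoidHom.range_eq_top.2 hπ, ← commutator_def]
    exact hK ha
  obtain ⟨u, hu, hua⟩ := this
  have hker : u⁻¹ * a ∈ π.ker := by
    rw [MonoidHom.mem_ker, map_mul, map_inv, hua, inv_mul_cancel]
  simpa using mul_mem_sup hu (hB hker)

end Presentation

theorem exponent_itCommQuot_dvd_exponent_tensorPair {F G : Type} [Group F] [Group G]
    {π : F →* G} (hπ : Function.Surjective π) (K : Subgroup G) [K.Normal]
    (hK : K ≤ commutator G) (c : ℕ) :
    Monoid.exponent (itCommQuot (K.comap π) (comap π ⁅K, ⊤⁆) c) ∣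
      AddMonoid.exponent (tensorPair K (G ⧸ K) c) := by
  have : Fact (⁅K.comap π, ⊤⁆ ≤ comap π ⁅K, ⊤⁆) := ⟨by
    rw [← map_le_iff_le_comap, map_commutator, map_comap_eq_self_of_surjective hπ]
    exact commutator_mono le_rfl le_top⟩
  obtain ⟨ψ, hψ⟩ :=
    exists_surjective_abelianization_itCommQuot_zero hπ K (ker_le_comap π ⁅K, ⊤⁆)
  choose β hβ using exists_additive_pairing_closure_eq_top
    (comap_le_commutator_sup hπ hK _ (ker_le_comap π ⁅K, ⊤⁆))
    ((QuotientGroup.mk' K).comp π) ((QuotientGroup.mk'_surjective K).comp hπ)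
    (by rw [← MonoidHom.comap_ker, QuotientGroup.ker_mk'])
  obtain ⟨Φ, hΦ⟩ := exists_surjective_iterTensor
    (M := .of ℤ (AbOf K)) (B := .of ℤ (AbOf (G ⧸ K)))
    (Q := fun c => Additive (itCommQuot (K.comap π) (comap π ⁅K, ⊤⁆) c))
    ψ.toAdditive hψ β hβ c
  rw [← AddMonoid.exponent_additive]
  exact AddMonoidHom.exponent_dvd hΦ

theorem pow_prod_Icc_mem {M : Type*} [Monoid M] {X : ℕ → Set M} {e : ℕ → ℕ}
    (h : ∀ i, 1 ≤ i → ∀ x ∈ X i, x ^ e i ∈ X (i + 1)) :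
    ∀ k, ∀ x ∈ X 1, x ^ ∏ i ∈ Finset.Icc 1 k, e i ∈ X (k + 1)
  | 0, x, hx => by simpa using hx
  | k + 1, x, hx => by
    rw [Finset.prod_Icc_succ_top (Nat.le_add_left 1 k), pow_mul]
    exact h (k + 1) (Nat.le_add_left 1 k) _ (pow_prod_Icc_mem h k x hx)

theorem exponent_multiplier_dvd_of_nilpotent_class_le_general {G : Type} [Group G]
    {F : Type} [Group F] (π : F →* G) (hπ : Function.Surjective π)
    (N : Subgroup G) [N.Normal] (c t : ℕ) (ht : 2 ≤ t)
    (hnil : itComm N ⊤ t = ⊥) :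
    Monoid.exponent (McPair π N c) ∣
      Monoid.exponent (McPairQuot π N (itComm N ⊤ 1) c) *
        ∏ i ∈ Finset.Icc 1 (t - 1),
          AddMonoid.exponent (tensorPair (itComm N ⊤ i) (G ⧸ itComm N ⊤ i) c) := by
  have hstep (i : ℕ) (hi : 1 ≤ i) (x : F) (hx : x ∈ itComm ((itComm N ⊤ i).comap π) ⊤ c) :
      x ^ AddMonoid.exponent (tensorPair (itComm N ⊤ i) (G ⧸ itComm N ⊤ i) c) ∈
        itComm ((itComm N ⊤ (i + 1)).comap π) ⊤ c := by
    obtain ⟨j, rfl⟩ := Nat.exists_eq_add_of_le' hi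
    refine exponent_quotient_subgroupOf_dvd_iff.1
      (exponent_itCommQuot_dvd_exponent_tensorPair hπ _ ?_ c) x hx
    rw [commutator_def]
    exact commutator_mono le_top le_rfl
  have hbase (x : F) (hx : x ∈ π.ker ⊓ itComm (N.comap π) ⊤ c) :
      x ^ Monoid.exponent (McPairQuot π N (itComm N ⊤ 1) c) ∈
        itComm ((itComm N ⊤ 1).comap π) ⊤ c :=
    exponent_quotient_subgroupOf_dvd_iff.1 dvd_rfl x ⟨ker_le_comap π _ hx.1, hx.2⟩
  refine exponent_quotient_subgroupOf_dvd_iff.2 fun x hx => ?_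
  have := pow_prod_Icc_mem (X := fun i => (itComm ((itComm N ⊤ i).comap π) ⊤ c : Set F)) hstep
    (t - 1) _ (hbase x hx)
  rwa [← pow_mul, Nat.sub_add_cancel (by omega), hnil, MonoidHom.comap_bot] at this

/-- Let `(G,N)` be a pair of finite groups which is nilpotent of class at most `t`, `t ≥ 2`
(`[N,_t G] = 1`), and `π : F ↠ G` a free presentation.  Then `exp(M^{(c)}(G,N))` divides
`exp(M^{(c)}(G/[N,G], N/[N,G])) · ∏_{i=1}^{t−1} exp(⊗^{c+1}([N,_i G], G/[N,_i G]))`. -/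
theorem exponent_multiplier_dvd_of_nilpotent_class_le {G : Type} [Group G] [Finite G]
    {F : Type} [Group F] [IsFreeGroup F] (π : F →* G) (hπ : Function.Surjective π)
    (N : Subgroup G) [N.Normal] (c t : ℕ) (hc : 1 ≤ c) (ht : 2 ≤ t)
    (hnil : itComm N ⊤ t = ⊥) :
    Monoid.exponent (McPair π N c) ∣
      Monoid.exponent (McPairQuot π N (itComm N ⊤ 1) c) *
        ∏ i ∈ Finset.Icc 1 (t - 1),
          AddMonoid.exponent (tensorPair (itComm N ⊤ i) (G ⧸ itComm N ⊤ i) c) :=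
  exponent_multiplier_dvd_of_nilpotent_class_le_general π hπ N c t ht hnil
end

section
/- Let (G,N) be a pair of finite groups and K a normal subgroup of G contained in N. Then d(M^{(c)}(G,N)) ≤ d(M^{(c)}(G/K, N/K)) + d(M^{(c)}(G,K)), where d(X) is the minimal number of generators of the group X. -/
open Subgroup

/-- Minimal number of generators of a group. -/
noncomputable def dGen (X : Type*) [Group X] : ℕ :=
  sInf {n | ∃ s : Finset X, s.card = n ∧ Subgroup.closure (s : Set X) = ⊤}

/-- Minimal number of generators of an additive group. -/
noncomputable def dGenAdd (X : Type*) [AddGroup X] : ℕ :=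
  sInf {n | ∃ s : Finset X, s.card = n ∧ AddSubgroup.closure (s : Set X) = ⊤}

/-- `M^{(c)}(G,K) = (R ∩ [T,_c F]) / [R,_c F]`, where `R = ker π` and `T = π⁻¹(K)`,
relative to the free presentation `π : F ↠ G`. -/
def McPairSub {F G : Type} [Group F] [Group G] (π : F →* G) (K : Subgroup G) (c : ℕ) : Type :=
  (π.ker ⊓ itComm (K.comap π) ⊤ c : Subgroup F) ⧸
    (itComm π.ker ⊤ c).subgroupOf (π.ker ⊓ itComm (K.comap π) ⊤ c)

noncomputable instance {F G : Type} [Group F] [Group G] (π : F →* G) (K : Subgroup G) (c : ℕ) :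
    Group (McPairSub π K c) :=
  inferInstanceAs (Group ((π.ker ⊓ itComm (K.comap π) ⊤ c : Subgroup F) ⧸
    (itComm π.ker ⊤ c).subgroupOf (π.ker ⊓ itComm (K.comap π) ⊤ c)))


/-!
With `R = ker π`, `S = π⁻¹(N)`, `T = π⁻¹(K)` and `X = [S,_c F]`, inclusions of subgroups of `F`
give an exact sequence
`(R ∩ [T,_c F]) / [R,_c F] ↪ (R ∩ X) / [R,_c F] → (T ∩ X) / [T,_c F]`,
that is `M^{(c)}(G,K) ↪ M^{(c)}(G,N) → M^{(c)}(G/K,N/K)`. The last two groups are abelian, since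
`⁅R ∩ X, R ∩ X⁆ ≤ ⁅R, [S,_c F]⁆ ≤ [R,_c F]` by the three subgroups lemma (likewise for `T`), and
the second map, induced by `R ∩ X ≤ T ∩ X`, has image of finite index because
`(T ∩ X) / (R ∩ X)` embeds into the finite group `G`.
The minimal number of generators is subadditive in extensions of groups, and for finitely
generated abelian groups it is monotone on subgroups: induct on a generating set `{a} ∪ s`,
using that the image of a subgroup in `C / ⟨s⟩` lies in the cyclic group generated by `a`.
-/

section Rank

variable {X : Type*} [Group X]

theorem dGen_eq_rank [Group.FG X] : dGen X = Group.rank X := by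
  obtain ⟨s, hs, hsX⟩ := Group.rank_spec X
  refine le_antisymm (Nat.sInf_le ⟨s, hs, hsX⟩) ?_
  obtain ⟨t, ht, htX⟩ : dGen X ∈ {n | ∃ s : Finset X, s.card = n ∧ closure (s : Set X) = ⊤} :=
    Nat.sInf_mem ⟨_, s, rfl, hsX⟩
  exact ht ▸ Group.rank_le htX

theorem dGen_eq_zero_of_not_fg (h : ¬Group.FG X) : dGen X = 0 := by
  refine Nat.sInf_eq_zero.mpr (Or.inr (Set.eq_empty_of_forall_notMem ?_))
  rintro n ⟨s, -, hs⟩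
  exact h (Group.fg_iff.mpr ⟨s, hs, s.finite_toSet⟩)

end Rank

namespace Subgroup

theorem closure_image_out_union_image_val_eq_top {B : Type*} [Group B] (P : Subgroup B)
    [P.Normal] {s : Set (B ⧸ P)} (hs : closure s = ⊤) {t : Set P} (ht : closure t = ⊤) :
    closure (Quotient.out '' s ∪ Subtype.val '' t) = ⊤ := by
  set Z := closure (Quotient.out '' s ∪ Subtype.val '' t)
  have hPZ : P ≤ Z := by
    rw [← P.range_subtype, MonoidHom.range_eq_map, ← ht, MonoidHom.map_closure]
    exact closure_mono Set.subset_union_right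
  have hZ : Z.map (QuotientGroup.mk' P) = ⊤ := by
    rw [eq_top_iff, ← hs, closure_le]
    exact fun q hq ↦ ⟨q.out, subset_closure (.inl ⟨q, hq, rfl⟩), q.out_eq'⟩
  rw [← sup_eq_left.mpr hPZ, ← QuotientGroup.ker_mk' P, ← comap_map_eq, hZ, comap_top]

theorem exists_zpowers_sup_inf_ker_eq {C Q : Type*} [Group C] [Group Q] (f : C →* Q) (q : Q)
    {H : Subgroup C} (hH : H.map f ≤ zpowers q) : ∃ h ∈ H, zpowers h ⊔ (H ⊓ f.ker) = H := by
  obtain ⟨n, hn⟩ := (le_zpowers_iff q _).mp hH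
  obtain ⟨h, hH, hh⟩ : q ^ n ∈ H.map f := hn ▸ mem_zpowers _
  refine ⟨h, hH, le_antisymm (sup_le (zpowers_le.mpr hH) inf_le_left) fun x hx ↦ ?_⟩
  obtain ⟨k, hk⟩ : f x ∈ zpowers (f h) := hh ▸ hn ▸ mem_map_of_mem f hx
  rw [← mul_inv_cancel_left (h ^ k) x]
  refine mul_mem_sup (zpow_mem_zpowers h k) (mem_inf.mpr ⟨mul_mem (inv_mem (zpow_mem hH k)) hx, ?_⟩)
  simp [hk]

theorem exists_finset_card_le_closure_eq {C : Type*} [Group C] [IsMulCommutative C]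
    (s : Finset C) {H : Subgroup C} (hH : H ≤ closure s) :
    ∃ t : Finset C, t.card ≤ s.card ∧ closure (t : Set C) = H := by
  classical
  induction s using Finset.induction_on generalizing H with
  | empty => exact ⟨∅, le_rfl, by simpa [eq_comm] using hH⟩
  | insert a s ha ih =>
    set D := closure (s : Set C)
    have hclosure (b : C) (u : Finset C) :
        closure (insert b u : Finset C) = zpowers b ⊔ closure (u : Set C) := by
      rw [Finset.coe_insert, Set.insert_eq, closure_union, ← zpowers_eq_closure]
    obtain ⟨t, ht, htD⟩ := ih (H := H ⊓ D) inf_le_right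
    have hmap : H.map (QuotientGroup.mk' D) ≤ zpowers (a : C ⧸ D) :=
      calc H.map _ ≤ (zpowers a ⊔ D).map (QuotientGroup.mk' D) := map_mono (hclosure a s ▸ hH)
        _ = zpowers (a : C ⧸ D) := by
          rw [map_sup, MonoidHom.map_zpowers,
            (map_eq_bot_iff _).mpr (QuotientGroup.ker_mk' D).ge, sup_bot_eq]
          rfl
    obtain ⟨h, -, hh⟩ := exists_zpowers_sup_inf_ker_eq _ _ hmap
    refine ⟨insert h t, (Finset.card_insert_le _ _).trans ?_, ?_⟩
    · rw [Finset.card_insert_of_notMem ha]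
      omega
    · rw [hclosure, htD]
      rwa [QuotientGroup.ker_mk'] at hh

end Subgroup

namespace Group

section Extension

variable {B : Type*} [Group B] (P : Subgroup B) [P.Normal]

theorem fg_of_fg_of_fg_quotient [FG P] [FG (B ⧸ P)] : FG B := by
  obtain ⟨s, hs, hsf⟩ := fg_iff.mp ‹FG (B ⧸ P)›
  obtain ⟨t, ht, htf⟩ := fg_iff.mp ‹FG P›
  exact fg_iff.mpr ⟨_, P.closure_image_out_union_image_val_eq_top hs ht,
    (hsf.image _).union (htf.image _)⟩

theorem rank_le_rank_quotient_add_rank [FG B] [FG P] : rank B ≤ rank (B ⧸ P) + rank P := by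
  classical
  obtain ⟨s, hs, hsB⟩ := rank_spec (B ⧸ P)
  obtain ⟨t, ht, htP⟩ := rank_spec P
  calc rank B ≤ (s.image Quotient.out ∪ t.image Subtype.val).card := by
        refine rank_le ?_
        push_cast
        exact P.closure_image_out_union_image_val_eq_top hsB htP
    _ ≤ (s.image Quotient.out).card + (t.image Subtype.val).card := Finset.card_union_le _ _
    _ ≤ rank (B ⧸ P) + rank P := hs ▸ ht ▸ add_le_add Finset.card_image_le Finset.card_image_le

end Extension

section IsMulCommutative

variable {C : Type*} [Group C] [IsMulCommutative C] [FG C] (H : Subgroup C)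

theorem fg_subgroup_of_isMulCommutative : FG H := by
  obtain ⟨s, -, hs⟩ := rank_spec C
  obtain ⟨t, -, rfl⟩ := Subgroup.exists_finset_card_le_closure_eq s (hs ▸ le_top : H ≤ _)
  infer_instance

theorem rank_subgroup_le_of_isMulCommutative [FG H] : rank H ≤ rank C := by
  obtain ⟨s, hs, hsC⟩ := rank_spec C
  obtain ⟨t, ht, rfl⟩ := Subgroup.exists_finset_card_le_closure_eq s (hsC ▸ le_top : H ≤ _)
  exact (Subgroup.rank_closure_finset_le_card t).trans (hs ▸ ht)

end IsMulCommutative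

end Group

open Group in
theorem dGen_le_add_of_exact {A B C : Type*} [Group A] [Group B] [IsMulCommutative B] [Group C]
    [IsMulCommutative C] {g : A →* B} (hg : Function.Injective g) {f : B →* C}
    (hgf : g.range = f.ker) (hf : f.range.FiniteIndex) : dGen B ≤ dGen C + dGen A := by
  by_cases hB : FG B
  swap
  · simp [dGen_eq_zero_of_not_fg hB]
  have := fg_subgroup_of_isMulCommutative f.ker
  have : FG C := fg_of_fg_of_fg_quotient f.range
  let e : A ≃* f.ker := (MonoidHom.ofInjective hg).trans (MulEquiv.subgroupCongr hgf)
  have : FG A := fg_of_surjective (f := e.symm.toMonoidHom) e.symm.surjective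
  rw [dGen_eq_rank, dGen_eq_rank, dGen_eq_rank]
  calc rank B ≤ rank (B ⧸ f.ker) + rank f.ker := rank_le_rank_quotient_add_rank _
    _ = rank f.range + rank A := by
      rw [rank_congr (QuotientGroup.quotientKerEquivRange f), rank_congr e]
    _ ≤ rank C + rank A := Nat.add_le_add_right (rank_subgroup_le_of_isMulCommutative _) _

section IteratedCommutator

variable {P : Type*} [Group P]

theorem itComm_mono {X X' Y : Subgroup P} (h : X ≤ X') (c : ℕ) :
    itComm X Y c ≤ itComm X' Y c := by
  induction c with
  | zero => exact h
  | succ c ih => exact commutator_mono ih le_rfl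

theorem Subgroup.commutator_commutator_le_sup_s17 (X Y Z : Subgroup P) [X.Normal] [Y.Normal]
    [Z.Normal] : ⁅⁅X, Y⁆, Z⁆ ≤ ⁅⁅Y, Z⁆, X⁆ ⊔ ⁅⁅Z, X⁆, Y⁆ := by
  set W := ⁅⁅Y, Z⁆, X⁆ ⊔ ⁅⁅Z, X⁆, Y⁆
  have hW {U V : Subgroup P} (h : ⁅U, V⁆ ≤ W) :
      ⁅U.map (QuotientGroup.mk' W), V.map (QuotientGroup.mk' W)⁆ = ⊥ := by
    rwa [← map_commutator, map_eq_bot_iff, QuotientGroup.ker_mk']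
  rw [← QuotientGroup.ker_mk' W, ← map_eq_bot_iff, map_commutator, map_commutator]
  exact commutator_commutator_eq_bot_of_rotate (by rw [← map_commutator]; exact hW le_sup_left)
    (by rw [← map_commutator]; exact hW le_sup_right)

theorem commutator_itComm_le_s17 (T S : Subgroup P) [T.Normal] [S.Normal] (b : ℕ) :
    ∀ a : ℕ, ⁅itComm T ⊤ a, itComm S ⊤ b⁆ ≤ itComm T ⊤ (b + a) := by
  induction b with
  | zero => exact fun a ↦ (commutator_le_left _ _).trans_eq (by rw [zero_add])
  | succ b ih =>
    intro a
    calc ⁅itComm T ⊤ a, itComm S ⊤ (b + 1)⁆ = ⁅⁅itComm S ⊤ b, ⊤⁆, itComm T ⊤ a⁆ :=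
          commutator_comm _ _
      _ ≤ ⁅⁅⊤, itComm T ⊤ a⁆, itComm S ⊤ b⁆ ⊔ ⁅⁅itComm T ⊤ a, itComm S ⊤ b⁆, ⊤⁆ :=
          commutator_commutator_le_sup_s17 _ _ _
      _ ≤ itComm T ⊤ (b + a + 1) := sup_le ?_ (commutator_mono (ih a) le_rfl)
      _ = itComm T ⊤ (b + 1 + a) := by rw [Nat.add_right_comm]
    rw [commutator_comm ⊤]
    exact ih (a + 1)

theorem commutator_inf_itComm_le (T S : Subgroup P) [T.Normal] [S.Normal] (c : ℕ) :
    ⁅T ⊓ itComm S ⊤ c, T ⊓ itComm S ⊤ c⁆ ≤ itComm T ⊤ c :=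
  (commutator_mono inf_le_left inf_le_right).trans (commutator_itComm_le_s17 T S c 0)

end IteratedCommutator

namespace Subgroup

variable {F : Type*} [Group F] {H H' K D D' : Subgroup F} [D.Normal] [D'.Normal]

def subquotientMap (hH : H ≤ H') (hD : D ≤ D') : H ⧸ D.subgroupOf H →* H' ⧸ D'.subgroupOf H' :=
  QuotientGroup.map _ _ (inclusion hH) fun _ hx ↦ hD hx

theorem subquotientMap_injective (hH : H ≤ H') :
    Function.Injective (subquotientMap hH (le_refl D)) := by
  refine (injective_iff_map_eq_one _).mpr fun x ↦ ?_
  induction x using QuotientGroup.induction_on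
  exact fun hx ↦
    (QuotientGroup.eq_one_iff _).mpr ((QuotientGroup.eq_one_iff (inclusion hH _)).mp hx)

theorem range_subquotientMap_eq_ker (hH : H ≤ H') (hD : D ≤ D') (hKH : K ≤ H) (hKD : K ≤ D')
    (hHD : H ⊓ D' ≤ K) : (subquotientMap hKH (le_refl D)).range = (subquotientMap hH hD).ker := by
  ext x
  induction x using QuotientGroup.induction_on with | H x => ?_
  refine ⟨?_, fun hx ↦ ⟨(⟨x, hHD ⟨x.2, (QuotientGroup.eq_one_iff (inclusion hH x)).mp hx⟩⟩ : K),
    rfl⟩⟩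
  rintro ⟨y, hy⟩
  induction y using QuotientGroup.induction_on with | H y => ?_
  rw [← hy]
  exact (QuotientGroup.eq_one_iff _).mpr (hKD y.2)

theorem finiteIndex_range_subquotientMap (hH : H ≤ H') (hD : D ≤ D')
    [(H.subgroupOf H').FiniteIndex] : (subquotientMap hH hD).range.FiniteIndex := by
  have hmap : ((H.subgroupOf H').map (QuotientGroup.mk' _)).FiniteIndex :=
    ⟨fun h ↦ FiniteIndex.index_ne_zero (H := H.subgroupOf H') <| Nat.eq_zero_of_zero_dvd <|
      h ▸ index_map_dvd _ (QuotientGroup.mk'_surjective (D'.subgroupOf H'))⟩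
  refine finiteIndex_of_le (H := (H.subgroupOf H').map (QuotientGroup.mk' _)) ?_
  rintro _ ⟨x, hx, rfl⟩
  exact ⟨(⟨x, hx⟩ : H), rfl⟩

theorem isMulCommutative_subquotient (h : ⁅H, H⁆ ≤ D) :
    IsMulCommutative (H ⧸ D.subgroupOf H) where
  is_comm.comm x y := by
    induction x using QuotientGroup.induction_on with | H a => ?_
    induction y using QuotientGroup.induction_on with | H b => ?_
    refine QuotientGroup.eq.mpr (h ?_)
    -- `(a * b)⁻¹ * (b * a) = ⁅b⁻¹, a⁻¹⁆`
    convert commutator_mem_commutator (inv_mem b.2) (inv_mem a.2) using 1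
    simp [commutatorElement_def, mul_assoc]

end Subgroup

theorem dGen_multiplier_le_of_normal_general {G : Type} [Group G] [Finite G]
    {F : Type} [Group F] (π : F →* G)
    (N K : Subgroup G) [N.Normal] [K.Normal] (hKN : K ≤ N) (c : ℕ) :
    dGen (McPair π N c) ≤ dGen (McPairQuot π N K c) + dGen (McPairSub π K c) := by
  have hRT : π.ker ≤ K.comap π := π.ker_le_comap K
  have hDRT : itComm π.ker ⊤ c ≤ itComm (K.comap π) ⊤ c := itComm_mono hRT c
  have hDTX : itComm (K.comap π) ⊤ c ≤ itComm (N.comap π) ⊤ c := itComm_mono (comap_mono hKN) c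
  have hRX : π.ker ⊓ itComm (N.comap π) ⊤ c ≤ K.comap π ⊓ itComm (N.comap π) ⊤ c :=
    inf_le_inf_right _ hRT
  have hDTR : π.ker ⊓ itComm (K.comap π) ⊤ c ≤ π.ker ⊓ itComm (N.comap π) ⊤ c :=
    inf_le_inf_left _ hDTX
  have : IsMulCommutative (McPair π N c) :=
    isMulCommutative_subquotient (commutator_inf_itComm_le π.ker (N.comap π) c)
  have : IsMulCommutative (McPairQuot π N K c) :=
    isMulCommutative_subquotient (commutator_inf_itComm_le (K.comap π) (N.comap π) c)
  have : ((π.ker ⊓ itComm (N.comap π) ⊤ c).subgroupOf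
      (K.comap π ⊓ itComm (N.comap π) ⊤ c)).FiniteIndex :=
    finiteIndex_of_le (H := π.ker.subgroupOf _) fun x hx ↦ ⟨hx, x.2.2⟩
  exact dGen_le_add_of_exact (subquotientMap_injective (D := itComm π.ker ⊤ c) hDTR)
    (range_subquotientMap_eq_ker hRX hDRT hDTR inf_le_right (inf_le_inf_right _ inf_le_left))
    (finiteIndex_range_subquotientMap hRX hDRT)

/-- Let `(G,N)` be a pair of finite groups, `K` a normal subgroup of `G` contained in `N`, and
`π : F ↠ G` a free presentation.  Then
`d(M^{(c)}(G,N)) ≤ d(M^{(c)}(G/K, N/K)) + d(M^{(c)}(G,K))`, where `d(X)` is the minimal number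
of generators of `X`. -/
theorem dGen_multiplier_le_of_normal {G : Type} [Group G] [Finite G]
    {F : Type} [Group F] [IsFreeGroup F] (π : F →* G) (hπ : Function.Surjective π)
    (N K : Subgroup G) [N.Normal] [K.Normal] (hKN : K ≤ N) (c : ℕ) (hc : 1 ≤ c) :
    dGen (McPair π N c) ≤ dGen (McPairQuot π N K c) + dGen (McPairSub π K c) :=
  dGen_multiplier_le_of_normal_general π N K hKN c
end
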